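/- arXiv:math/0007145 — 5 statements merged into one kernel-verified Lean document; each statement's English description precedes it below -/
import Mathlib

section
/- Let q > 1 be a real number, D a positive integer, and c an integer. Define B(s) = (q^{c(1−s)} + q^{c(s−1)})/(q^{D(s−1)} − 1) + (q^{cs} + q^{−cs})/(q^{−Ds} − 1) for complex s. Then s·B(s) tends to −2/(D·log q) as s tends to 0 through nonzero values, and (s−1)·B(s) tends to 2/(D·log q) as s tends to 1 through values different from 1. In particular B has simple poles at s = 0 and s = 1. -/
open Filter Topology

lemma exp_slope : Tendsto (fun z : ℂ => (Complex.exp z - 1) / z) (𝓝[≠] (0:ℂ)) (𝓝 1) := by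
  have h := (Complex.hasDerivAt_exp 0)
  rw [hasDerivAt_iff_tendsto_slope] at h
  simp only [Complex.exp_zero] at h
  refine h.congr fun z => ?_
  simp [slope_def_field, div_eq_mul_inv, mul_comm]

lemma maps_mul {w : ℂ} (hw : w ≠ 0) :
    Tendsto (fun s : ℂ => w * s) (𝓝[≠] (0:ℂ)) (𝓝[≠] (0:ℂ)) := by
  apply tendsto_nhdsWithin_of_tendsto_nhds_of_eventually_within
  · have : Tendsto (fun s : ℂ => w * s) (𝓝 0) (𝓝 (w * 0)) :=
      (continuous_const.mul continuous_id).tendsto 0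
    simpa using this.mono_left nhdsWithin_le_nhds
  · filter_upwards [self_mem_nhdsWithin] with x hx
    simp only [Set.mem_compl_iff, Set.mem_singleton_iff] at hx ⊢
    exact mul_ne_zero hw hx

lemma key {w : ℂ} (hw : w ≠ 0) :
    Tendsto (fun s : ℂ => s / (Complex.exp (w * s) - 1)) (𝓝[≠] (0:ℂ)) (𝓝 w⁻¹) := by
  have h1 : Tendsto (fun s : ℂ => (Complex.exp (w * s) - 1) / (w * s)) (𝓝[≠] (0:ℂ)) (𝓝 1) :=
    exp_slope.comp (maps_mul hw)
  have h2 := h1.inv₀ one_ne_zero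
  simp only [inv_one] at h2
  have h3 := h2.const_mul w⁻¹
  simp only [mul_one] at h3
  refine h3.congr fun s => ?_
  rw [inv_div, mul_div_assoc', inv_mul_cancel_left₀ hw]

lemma exp_real_ne_one {t : ℝ} (ht : t ≠ 0) : Complex.exp (t : ℂ) ≠ 1 := by
  intro h
  have h2 := congrArg norm h
  rw [Complex.norm_exp] at h2
  simp only [Complex.ofReal_re, map_one] at h2
  exact ht (by simpa using Real.exp_injective (by simpa using h2))

/-- Simple poles of the tail term at `s = 0` and `s = 1`:
`s·B(s) → -2/(D·log q)` as `s → 0`, `s ≠ 0`, and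
`(s-1)·B(s) → 2/(D·log q)` as `s → 1`, `s ≠ 1`, where
`B(s) = (q^{c(1-s)} + q^{c(s-1)})/(q^{D(s-1)} - 1) + (q^{cs} + q^{-cs})/(q^{-Ds} - 1)`. -/
theorem stmt_3 (q : ℝ) (hq : 1 < q) (D : ℕ) (hD : 0 < D) (c : ℤ)
    (B : ℂ → ℂ)
    (hB : ∀ z : ℂ,
      B z = ((q : ℂ) ^ ((c : ℂ) * (1 - z)) + (q : ℂ) ^ ((c : ℂ) * (z - 1)))
              / ((q : ℂ) ^ ((D : ℂ) * (z - 1)) - 1)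
            + ((q : ℂ) ^ ((c : ℂ) * z) + (q : ℂ) ^ (-(c : ℂ) * z))
              / ((q : ℂ) ^ (-(D : ℂ) * z) - 1)) :
    Tendsto (fun s : ℂ => s * B s) (𝓝[≠] (0 : ℂ))
        (𝓝 (-2 / ((D : ℂ) * (Real.log q : ℂ)))) ∧
    Tendsto (fun s : ℂ => (s - 1) * B s) (𝓝[≠] (1 : ℂ))
        (𝓝 (2 / ((D : ℂ) * (Real.log q : ℂ)))) := by
  have hq0 : (q : ℂ) ≠ 0 := by
    simp only [ne_eq, Complex.ofReal_eq_zero]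
    positivity
  set L : ℂ := (Real.log q : ℂ) with hLdef
  have hlq : (0:ℝ) < Real.log q := Real.log_pos hq
  have hL : L ≠ 0 := by
    simp only [hLdef, ne_eq, Complex.ofReal_eq_zero]
    exact ne_of_gt hlq
  have hDC : (D : ℂ) ≠ 0 := Nat.cast_ne_zero.mpr hD.ne'
  have hDL : (D : ℂ) * L ≠ 0 := mul_ne_zero hDC hL
  have hcpow : ∀ z : ℂ, (q : ℂ) ^ z = Complex.exp (L * z) := by
    intro z
    rw [Complex.cpow_def_of_ne_zero hq0, hLdef, Complex.ofReal_log (le_of_lt (lt_trans one_pos hq))]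
  have hB' : ∀ z : ℂ,
      B z = (Complex.exp (L * ((c : ℂ) * (1 - z))) + Complex.exp (L * ((c : ℂ) * (z - 1))))
              / (Complex.exp (L * ((D : ℂ) * (z - 1))) - 1)
            + (Complex.exp (L * ((c : ℂ) * z)) + Complex.exp (L * (-(c : ℂ) * z)))
              / (Complex.exp (L * (-(D : ℂ) * z)) - 1) := by
    intro z; rw [hB z, hcpow, hcpow, hcpow, hcpow, hcpow, hcpow]
  -- the common nonzero fact: exp(-D·L) ≠ 1
  have hne : Complex.exp (-(D : ℂ) * L) ≠ 1 := by
    have heq : -(D : ℂ) * L = ((-(D * Real.log q) : ℝ) : ℂ) := by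
      rw [hLdef]; push_cast; ring
    rw [heq]
    have hDpos : (0:ℝ) < D := by exact_mod_cast hD
    exact exp_real_ne_one (by nlinarith)
  constructor
  · -- at s = 0
    have t1 : Tendsto (fun s : ℂ =>
        s * ((Complex.exp (L * ((c : ℂ) * (1 - s))) + Complex.exp (L * ((c : ℂ) * (s - 1))))
          / (Complex.exp (L * ((D : ℂ) * (s - 1))) - 1))) (𝓝[≠] (0:ℂ)) (𝓝 0) := by
      have hc : ContinuousAt (fun s : ℂ =>
          s * ((Complex.exp (L * ((c : ℂ) * (1 - s))) + Complex.exp (L * ((c : ℂ) * (s - 1))))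
            / (Complex.exp (L * ((D : ℂ) * (s - 1))) - 1))) 0 := by
        apply ContinuousAt.mul continuousAt_id
        apply ContinuousAt.div
        · fun_prop
        · fun_prop
        · have : L * ((D : ℂ) * ((0:ℂ) - 1)) = -(D : ℂ) * L := by ring
          rw [this]
          exact sub_ne_zero.mpr hne
      have := hc.tendsto.mono_left (nhdsWithin_le_nhds : 𝓝[≠] (0:ℂ) ≤ 𝓝 0)
      simpa using this
    have t2 : Tendsto (fun s : ℂ => s / (Complex.exp (L * (-(D : ℂ) * s)) - 1)) (𝓝[≠] (0:ℂ))
        (𝓝 (-((D:ℂ) * L))⁻¹) := by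
      have h := key (w := -((D:ℂ) * L)) (by simpa using hDL)
      refine h.congr fun s => ?_
      congr 2
      ring
    have t3 : Tendsto (fun s : ℂ =>
        Complex.exp (L * ((c : ℂ) * s)) + Complex.exp (L * (-(c : ℂ) * s))) (𝓝[≠] (0:ℂ)) (𝓝 2) := by
      have hc : ContinuousAt (fun s : ℂ =>
          Complex.exp (L * ((c : ℂ) * s)) + Complex.exp (L * (-(c : ℂ) * s))) 0 := by fun_prop
      have := hc.tendsto.mono_left (nhdsWithin_le_nhds : 𝓝[≠] (0:ℂ) ≤ 𝓝 0)
      simpa [show (1:ℂ)+1 = 2 from by norm_num] using this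
    have := t1.add (t2.mul t3)
    have heq : (0 : ℂ) + (-((D:ℂ) * L))⁻¹ * 2 = -2 / ((D : ℂ) * L) := by
      field_simp
      ring
    rw [heq] at this
    refine this.congr fun s => ?_
    rw [hB' s]; ring
  · -- at s = 1
    have htr : Tendsto (fun s : ℂ => s - 1) (𝓝[≠] (1:ℂ)) (𝓝[≠] (0:ℂ)) := by
      apply tendsto_nhdsWithin_of_tendsto_nhds_of_eventually_within
      · have : Tendsto (fun s : ℂ => s - 1) (𝓝 1) (𝓝 ((1:ℂ) - 1)) :=
          (continuous_id.sub continuous_const).tendsto 1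
        simpa using this.mono_left nhdsWithin_le_nhds
      · filter_upwards [self_mem_nhdsWithin] with x hx
        simp only [Set.mem_compl_iff, Set.mem_singleton_iff] at hx ⊢
        exact sub_ne_zero.mpr hx
    have t1 : Tendsto (fun s : ℂ => (s - 1) / (Complex.exp (L * ((D : ℂ) * (s - 1))) - 1))
        (𝓝[≠] (1:ℂ)) (𝓝 ((D:ℂ) * L)⁻¹) := by
      have h := (key (w := (D:ℂ) * L) hDL).comp htr
      refine h.congr fun s => ?_
      simp only [Function.comp]
      congr 2
      ring
    have t2 : Tendsto (fun s : ℂ =>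
        Complex.exp (L * ((c : ℂ) * (1 - s))) + Complex.exp (L * ((c : ℂ) * (s - 1))))
        (𝓝[≠] (1:ℂ)) (𝓝 2) := by
      have hc : ContinuousAt (fun s : ℂ =>
          Complex.exp (L * ((c : ℂ) * (1 - s))) + Complex.exp (L * ((c : ℂ) * (s - 1)))) 1 := by
        fun_prop
      have := hc.tendsto.mono_left (nhdsWithin_le_nhds : 𝓝[≠] (1:ℂ) ≤ 𝓝 1)
      simpa [show (1:ℂ)+1 = 2 from by norm_num] using this
    have t3 : Tendsto (fun s : ℂ =>
        (s - 1) * ((Complex.exp (L * ((c : ℂ) * s)) + Complex.exp (L * (-(c : ℂ) * s)))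
          / (Complex.exp (L * (-(D : ℂ) * s)) - 1))) (𝓝[≠] (1:ℂ)) (𝓝 0) := by
      have hc : ContinuousAt (fun s : ℂ =>
          (s - 1) * ((Complex.exp (L * ((c : ℂ) * s)) + Complex.exp (L * (-(c : ℂ) * s)))
            / (Complex.exp (L * (-(D : ℂ) * s)) - 1))) 1 := by
        apply ContinuousAt.mul (by fun_prop)
        apply ContinuousAt.div
        · fun_prop
        · fun_prop
        · have : L * (-(D : ℂ) * (1:ℂ)) = -(D : ℂ) * L := by ring
          rw [this]
          exact sub_ne_zero.mpr hne
      have := hc.tendsto.mono_left (nhdsWithin_le_nhds : 𝓝[≠] (1:ℂ) ≤ 𝓝 1)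
      simpa using this
    have := (t1.mul t2).add t3
    have heq : ((D:ℂ) * L)⁻¹ * 2 + 0 = 2 / ((D : ℂ) * L) := by
      field_simp
      ring
    rw [heq] at this
    refine this.congr fun s => ?_
    rw [hB' s]; ring
end

section
/- Let q be a nonzero rational number, r and g positive integers, and P ∈ ℚ[t] a polynomial with P(0) ≠ 0. Let Z(t) = P(t)/((1 − t^r)(1 − q^r t^r)) in the field ℚ(t) of rational functions, and let φ be the ℚ-algebra automorphism of ℚ(t) sending t to 1/(q t). If Z(t) · t^{−r(g−1)} = φ(Z) · (q t)^{r(g−1)} in ℚ(t), then deg P = 2rg. -/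
open Polynomial RatFunc in
private lemma aeval_X_ratfunc (A : Polynomial ℚ) :
    Polynomial.aeval (RatFunc.X : RatFunc ℚ) A = algebraMap (Polynomial ℚ) (RatFunc ℚ) A := by
  rw [← RatFunc.algebraMap_X, Polynomial.aeval_algebraMap_apply, Polynomial.aeval_X_left_apply]

open Polynomial RatFunc in
private lemma aeval_invX_ratfunc (A : Polynomial ℚ) :
    Polynomial.aeval ((RatFunc.X : RatFunc ℚ))⁻¹ A
      = algebraMap (Polynomial ℚ) (RatFunc ℚ) A.reverse
          * ((RatFunc.X : RatFunc ℚ) ^ A.natDegree)⁻¹ := by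
  letI : Invertible ((RatFunc.X : RatFunc ℚ)⁻¹) :=
    invertibleOfNonzero (inv_ne_zero RatFunc.X_ne_zero)
  have h := Polynomial.eval₂_reverse_mul_pow (algebraMap ℚ (RatFunc ℚ))
    ((RatFunc.X : RatFunc ℚ))⁻¹ A
  rw [invOf_eq_inv, inv_inv] at h
  rw [Polynomial.aeval_def, ← h, ← Polynomial.aeval_def, aeval_X_ratfunc, inv_pow]

/-- Degree computation in Theorem 2 (b): if
`Z(t) = P(t)/((1 - t^r)(1 - q^r t^r))` in `ℚ(t)` with `P(0) ≠ 0`, `φ` is the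
`ℚ`-algebra automorphism of `ℚ(t)` with `φ(t) = 1/(qt)`, and the functional
equation `Z(t)·t^{-r(g-1)} = φ(Z)·(qt)^{r(g-1)}` holds, then `deg P = 2rg`. -/
theorem stmt_6 (q : ℚ) (hq : q ≠ 0) (r g : ℕ) (hr : 0 < r) (hg : 0 < g)
    (P : Polynomial ℚ) (hP0 : P.eval 0 ≠ 0)
    (φ : RatFunc ℚ ≃ₐ[ℚ] RatFunc ℚ)
    (hφ : φ RatFunc.X = 1 / (RatFunc.C q * RatFunc.X))
    (Z : RatFunc ℚ)
    (hZ : Z = algebraMap (Polynomial ℚ) (RatFunc ℚ) P /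
        ((1 - RatFunc.X ^ r) * (1 - RatFunc.C (q ^ r) * RatFunc.X ^ r)))
    (hfe : Z * RatFunc.X ^ (-(r * (g - 1) : ℤ))
        = φ Z * (RatFunc.C q * RatFunc.X) ^ ((r * (g - 1) : ℤ))) :
    P.natDegree = 2 * r * g := by
  obtain ⟨g, rfl⟩ : ∃ g', g = g' + 1 := ⟨g - 1, (Nat.succ_pred_eq_of_pos hg).symm⟩
  set n := P.natDegree with hn
  have hX : (RatFunc.X : RatFunc ℚ) ≠ 0 := RatFunc.X_ne_zero
  have hCq : (RatFunc.C q : RatFunc ℚ) ≠ 0 := by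
    rw [← RatFunc.algebraMap_C]
    exact RatFunc.algebraMap_ne_zero (Polynomial.C_ne_zero.mpr hq)
  have hD1 : (1 - RatFunc.X ^ r : RatFunc ℚ) ≠ 0 := by
    have : (1 - RatFunc.X ^ r : RatFunc ℚ)
        = algebraMap (Polynomial ℚ) (RatFunc ℚ) (1 - Polynomial.X ^ r) := by
      simp [map_sub, map_pow, RatFunc.algebraMap_X]
    rw [this]
    refine RatFunc.algebraMap_ne_zero fun h => ?_
    have := congrArg (Polynomial.eval 0) h
    simp [zero_pow hr.ne'] at this
  have hD2 : (1 - RatFunc.C (q ^ r) * RatFunc.X ^ r : RatFunc ℚ) ≠ 0 := by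
    have : (1 - RatFunc.C (q ^ r) * RatFunc.X ^ r : RatFunc ℚ)
        = algebraMap (Polynomial ℚ) (RatFunc ℚ)
            (1 - Polynomial.C (q ^ r) * Polynomial.X ^ r) := by
      simp [map_sub, map_pow, map_mul, RatFunc.algebraMap_X, RatFunc.algebraMap_C]
    rw [this]
    refine RatFunc.algebraMap_ne_zero fun h => ?_
    have := congrArg (Polynomial.eval 0) h
    simp [zero_pow hr.ne'] at this
  set P₁ := P.comp (Polynomial.C q⁻¹ * Polynomial.X) with hP₁def
  have hP₁0 : P₁.coeff 0 ≠ 0 := by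
    rw [Polynomial.coeff_zero_eq_eval_zero, hP₁def, Polynomial.eval_comp]
    simpa using hP0
  have hP₁ne : P₁ ≠ 0 := fun h => hP₁0 (by simp [h])
  have hP₁deg : P₁.natDegree = n := by
    rw [hP₁def, Polynomial.natDegree_comp,
      Polynomial.natDegree_C_mul_X _ (inv_ne_zero hq), mul_one]
  set Q := P₁.reverse with hQdef
  have hQ0 : Q.coeff 0 ≠ 0 := by
    rw [hQdef, Polynomial.coeff_zero_reverse]
    exact Polynomial.leadingCoeff_ne_zero.mpr hP₁ne
  have hQne : Q ≠ 0 := fun h => hQ0 (by simp [h])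
  have hφC : ∀ a : ℚ, φ (RatFunc.C a) = RatFunc.C a := fun a => by
    simpa [RatFunc.algebraMap_eq_C] using φ.commutes a
  -- φ applied to algebraMap P
  have hφP : φ (algebraMap (Polynomial ℚ) (RatFunc ℚ) P)
      = algebraMap (Polynomial ℚ) (RatFunc ℚ) Q * (RatFunc.X ^ n)⁻¹ := by
    rw [← aeval_X_ratfunc, ← Polynomial.aeval_algHom_apply, hφ, one_div]
    have h1 : ((RatFunc.C q * RatFunc.X)⁻¹ : RatFunc ℚ)
        = Polynomial.aeval ((RatFunc.X : RatFunc ℚ))⁻¹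
            (Polynomial.C q⁻¹ * Polynomial.X) := by
      simp [mul_inv, map_inv₀, RatFunc.algebraMap_eq_C]
      ring
    rw [h1, ← Polynomial.aeval_comp, ← hP₁def, aeval_invX_ratfunc, hP₁deg, hQdef]
  -- compute φ Z
  have hφZ : φ Z = algebraMap (Polynomial ℚ) (RatFunc ℚ) Q * (RatFunc.X ^ n)⁻¹ /
      ((1 - ((RatFunc.C q * RatFunc.X)⁻¹) ^ r)
        * (1 - RatFunc.C (q ^ r) * ((RatFunc.C q * RatFunc.X)⁻¹) ^ r)) := by
    rw [hZ, map_div₀, hφP]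
    simp only [map_mul, map_sub, map_one, map_pow, hφC, hφ, one_div]
  -- denominator relation
  have hCqrne : (RatFunc.C (q ^ r) : RatFunc ℚ) ≠ 0 := by
    rw [← RatFunc.algebraMap_C]
    exact RatFunc.algebraMap_ne_zero (Polynomial.C_ne_zero.mpr (pow_ne_zero _ hq))
  have hXr : (RatFunc.X : RatFunc ℚ) ^ r ≠ 0 := pow_ne_zero _ hX
  have hinvpow : ((RatFunc.C q * RatFunc.X)⁻¹ : RatFunc ℚ) ^ r
      = (RatFunc.C (q ^ r) * RatFunc.X ^ r)⁻¹ := by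
    rw [inv_pow, mul_pow, map_pow]
  have h2r : (RatFunc.X : RatFunc ℚ) ^ (2 * r) = RatFunc.X ^ r * RatFunc.X ^ r := by
    rw [two_mul, pow_add]
  have hDrel : ((1 - ((RatFunc.C q * RatFunc.X)⁻¹) ^ r)
        * (1 - RatFunc.C (q ^ r) * ((RatFunc.C q * RatFunc.X)⁻¹) ^ r))
      * (RatFunc.C (q ^ r) * RatFunc.X ^ (2 * r))
      = (1 - RatFunc.X ^ r) * (1 - RatFunc.C (q ^ r) * RatFunc.X ^ r) := by
    rw [hinvpow, h2r]
    have hab : (RatFunc.C (q ^ r) * RatFunc.X ^ r : RatFunc ℚ) ≠ 0 :=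
      mul_ne_zero hCqrne hXr
    have e1 : (1 - (RatFunc.C (q ^ r) * RatFunc.X ^ r)⁻¹ : RatFunc ℚ)
        * (RatFunc.C (q ^ r) * RatFunc.X ^ r)
        = RatFunc.C (q ^ r) * RatFunc.X ^ r - 1 := by
      rw [sub_mul, one_mul, inv_mul_cancel₀ hab]
    have e2 : (1 - RatFunc.C (q ^ r) * (RatFunc.C (q ^ r) * RatFunc.X ^ r)⁻¹ : RatFunc ℚ)
        * RatFunc.X ^ r = RatFunc.X ^ r - 1 := by
      rw [sub_mul, one_mul,
        show RatFunc.C (q ^ r) * (RatFunc.C (q ^ r) * RatFunc.X ^ r)⁻¹ * RatFunc.X ^ r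
          = (RatFunc.C (q ^ r) * RatFunc.X ^ r) * (RatFunc.C (q ^ r) * RatFunc.X ^ r)⁻¹
          from by ring, mul_inv_cancel₀ hab]
    calc (1 - (RatFunc.C (q ^ r) * RatFunc.X ^ r)⁻¹)
          * (1 - RatFunc.C (q ^ r) * (RatFunc.C (q ^ r) * RatFunc.X ^ r)⁻¹)
          * (RatFunc.C (q ^ r) * (RatFunc.X ^ r * RatFunc.X ^ r))
        = ((1 - (RatFunc.C (q ^ r) * RatFunc.X ^ r)⁻¹)
            * (RatFunc.C (q ^ r) * RatFunc.X ^ r))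
          * ((1 - RatFunc.C (q ^ r) * (RatFunc.C (q ^ r) * RatFunc.X ^ r)⁻¹)
            * RatFunc.X ^ r) := by ring
      _ = (RatFunc.C (q ^ r) * RatFunc.X ^ r - 1) * (RatFunc.X ^ r - 1) := by rw [e1, e2]
      _ = (1 - RatFunc.X ^ r) * (1 - RatFunc.C (q ^ r) * RatFunc.X ^ r) := by ring
  have hφDne : ((1 - ((RatFunc.C q * RatFunc.X)⁻¹) ^ r)
        * (1 - RatFunc.C (q ^ r) * ((RatFunc.C q * RatFunc.X)⁻¹) ^ r)) ≠ 0 := by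
    intro h
    rw [h, zero_mul] at hDrel
    exact mul_ne_zero hD1 hD2 hDrel.symm
  -- rewrite the functional equation with natural exponents
  have he1 : (RatFunc.X : RatFunc ℚ) ^ (-(↑r * (↑(g + 1) - 1) : ℤ))
      = ((RatFunc.X : RatFunc ℚ) ^ (r * g))⁻¹ := by
    have : (-(↑r * (↑(g + 1) - 1) : ℤ)) = -((r * g : ℕ) : ℤ) := by push_cast; ring
    rw [this, zpow_neg, zpow_natCast]
  have he2 : ((RatFunc.C q * RatFunc.X) : RatFunc ℚ) ^ ((↑r * (↑(g + 1) - 1) : ℤ))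
      = (RatFunc.C q * RatFunc.X) ^ (r * g) := by
    have : ((↑r * (↑(g + 1) - 1) : ℤ)) = ((r * g : ℕ) : ℤ) := by push_cast; ring
    rw [this, zpow_natCast]
  rw [he1, he2, hφZ, hZ] at hfe
  set E : RatFunc ℚ := (1 - ((RatFunc.C q * RatFunc.X)⁻¹) ^ r)
      * (1 - RatFunc.C (q ^ r) * ((RatFunc.C q * RatFunc.X)⁻¹) ^ r) with hE
  set M : RatFunc ℚ := RatFunc.C (q ^ r) * RatFunc.X ^ (2 * r) with hM
  have hMne : M ≠ 0 := mul_ne_zero hCqrne (pow_ne_zero _ hX)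
  have hXn : (RatFunc.X : RatFunc ℚ) ^ n ≠ 0 := pow_ne_zero _ hX
  have hXd : (RatFunc.X : RatFunc ℚ) ^ (r * g) ≠ 0 := pow_ne_zero _ hX
  rw [← hDrel, div_mul_eq_mul_div, div_mul_eq_mul_div,
    div_eq_div_iff (mul_ne_zero hφDne hMne) hφDne] at hfe
  have h2 : algebraMap (Polynomial ℚ) (RatFunc ℚ) P * (RatFunc.X ^ (r * g))⁻¹
      = algebraMap (Polynomial ℚ) (RatFunc ℚ) Q * (RatFunc.X ^ n)⁻¹
          * (RatFunc.C q * RatFunc.X) ^ (r * g) * M :=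
    mul_right_cancel₀ hφDne (by linear_combination hfe)
  have key : algebraMap (Polynomial ℚ) (RatFunc ℚ) P * RatFunc.X ^ n
      = algebraMap (Polynomial ℚ) (RatFunc ℚ) Q
          * (RatFunc.C q ^ (r + r * g) * RatFunc.X ^ (2 * r + 2 * (r * g))) := by
    calc algebraMap (Polynomial ℚ) (RatFunc ℚ) P * RatFunc.X ^ n
        = algebraMap (Polynomial ℚ) (RatFunc ℚ) P * (RatFunc.X ^ (r * g))⁻¹
            * (RatFunc.X ^ (r * g) * RatFunc.X ^ n) := by
          rw [mul_assoc, show ((RatFunc.X : RatFunc ℚ) ^ (r * g))⁻¹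
              * (RatFunc.X ^ (r * g) * RatFunc.X ^ n) = RatFunc.X ^ n
            from by rw [← mul_assoc, inv_mul_cancel₀ hXd, one_mul]]
      _ = algebraMap (Polynomial ℚ) (RatFunc ℚ) Q * (RatFunc.X ^ n)⁻¹
            * (RatFunc.C q * RatFunc.X) ^ (r * g) * M
            * (RatFunc.X ^ (r * g) * RatFunc.X ^ n) := by rw [h2]
      _ = algebraMap (Polynomial ℚ) (RatFunc ℚ) Q
            * (RatFunc.C q ^ (r + r * g) * RatFunc.X ^ (2 * r + 2 * (r * g))) := by
          rw [hM, map_pow, mul_pow]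
          rw [show algebraMap (Polynomial ℚ) (RatFunc ℚ) Q * (RatFunc.X ^ n)⁻¹
                * (RatFunc.C q ^ (r * g) * RatFunc.X ^ (r * g))
                * (RatFunc.C q ^ r * RatFunc.X ^ (2 * r))
                * (RatFunc.X ^ (r * g) * RatFunc.X ^ n)
              = algebraMap (Polynomial ℚ) (RatFunc ℚ) Q * ((RatFunc.X ^ n)⁻¹ * RatFunc.X ^ n)
                * (RatFunc.C q ^ (r + r * g) * RatFunc.X ^ (2 * r + 2 * (r * g)))
            from by ring, inv_mul_cancel₀ hXn, mul_one]
  have hpoly : P * Polynomial.X ^ n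
      = Q * (Polynomial.C (q ^ (r + r * g)) * Polynomial.X ^ (2 * r + 2 * (r * g))) := by
    apply RatFunc.algebraMap_injective
    simp only [map_mul, map_pow, RatFunc.algebraMap_X, RatFunc.algebraMap_C]
    exact key
  have hPne : P ≠ 0 := fun h => hP0 (by simp [h])
  have hPtr : P.natTrailingDegree = 0 := by
    rw [Polynomial.natTrailingDegree_eq_zero]
    exact Or.inr (by rwa [Polynomial.coeff_zero_eq_eval_zero])
  have hQtr : Q.natTrailingDegree = 0 := by
    rw [Polynomial.natTrailingDegree_eq_zero]; exact Or.inr hQ0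
  have hCne : (Polynomial.C (q ^ (r + r * g)) : Polynomial ℚ) ≠ 0 :=
    Polynomial.C_ne_zero.mpr (pow_ne_zero _ hq)
  have hmain := congrArg Polynomial.natTrailingDegree hpoly
  rw [Polynomial.natTrailingDegree_mul hPne (pow_ne_zero _ Polynomial.X_ne_zero),
    Polynomial.natTrailingDegree_mul hQne
      (mul_ne_zero hCne (pow_ne_zero _ Polynomial.X_ne_zero)),
    Polynomial.natTrailingDegree_mul hCne (pow_ne_zero _ Polynomial.X_ne_zero),
    Polynomial.natTrailingDegree_X_pow, Polynomial.natTrailingDegree_X_pow,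
    Polynomial.natTrailingDegree_C, hPtr, hQtr] at hmain
  have hmain' : n = 2 * r + 2 * (r * g) := by simpa using hmain
  rw [hmain']; ring
end

section
/- Let q be a nonzero complex number, r and g positive integers, c a nonzero complex number, and ω_1, …, ω_{2rg} nonzero complex numbers. Set P(t) = c·∏_{i=1}^{2rg}(1 − ω_i t) and Z(t) = P(t)/((1 − t^r)(1 − q^r t^r)) in ℂ(t), and let φ be the ℂ-algebra automorphism of ℂ(t) sending t to 1/(q t). If Z(t) · t^{−r(g−1)} = φ(Z) · (q t)^{r(g−1)} in ℂ(t), then ∏_{i=1}^{2rg} ω_i = q^{rg} and ∏_{i=1}^{2rg}(1 − ω_i t) = ∏_{i=1}^{2rg}(1 − (q/ω_i) t) as polynomials in ℂ[t]. -/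
/-- Key step of Theorem 2 (c): writing the numerator as
`P(t) = c·∏_{i=1}^{2rg}(1 - ω_i t)` with all `ω_i ≠ 0`, the functional equation
`Z(t)·t^{-r(g-1)} = φ(Z)·(qt)^{r(g-1)}` for
`Z(t) = P(t)/((1 - t^r)(1 - q^r t^r))` implies `∏ ω_i = q^{rg}` and
`∏ (1 - ω_i t) = ∏ (1 - (q/ω_i) t)` in `ℂ[t]`. -/
theorem stmt_7 (q : ℂ) (hq : q ≠ 0) (r g : ℕ) (hr : 0 < r) (hg : 0 < g)
    (c : ℂ) (hc : c ≠ 0) (ω : Fin (2 * r * g) → ℂ) (hω : ∀ i, ω i ≠ 0)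
    (P : Polynomial ℂ)
    (hP : P = Polynomial.C c * ∏ i, (1 - Polynomial.C (ω i) * Polynomial.X))
    (φ : RatFunc ℂ ≃ₐ[ℂ] RatFunc ℂ)
    (hφ : φ RatFunc.X = 1 / (RatFunc.C q * RatFunc.X))
    (Z : RatFunc ℂ)
    (hZ : Z = algebraMap (Polynomial ℂ) (RatFunc ℂ) P /
        ((1 - RatFunc.X ^ r) * (1 - RatFunc.C (q ^ r) * RatFunc.X ^ r)))
    (hfe : Z * RatFunc.X ^ (-(r * (g - 1) : ℤ))
        = φ Z * (RatFunc.C q * RatFunc.X) ^ ((r * (g - 1) : ℤ))) :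
    (∏ i, ω i) = q ^ (r * g) ∧
    (∏ i, (1 - Polynomial.C (ω i) * Polynomial.X))
      = ∏ i, (1 - Polynomial.C (q / ω i) * Polynomial.X) := by
  obtain ⟨s, rfl⟩ : ∃ s, g = s + 1 := ⟨g - 1, (Nat.succ_pred_eq_of_pos hg).symm⟩
  have hCφ : ∀ a : ℂ, φ (RatFunc.C a) = RatFunc.C a := fun a => by
    rw [← RatFunc.algebraMap_eq_C]; exact φ.commutes a
  have hu : (RatFunc.X : RatFunc ℂ) ≠ 0 := RatFunc.X_ne_zero
  have hk : (RatFunc.C q : RatFunc ℂ) ≠ 0 := by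
    simpa [← RatFunc.algebraMap_eq_C] using (map_ne_zero (algebraMap ℂ (RatFunc ℂ))).mpr hq
  have hCω : ∀ i, (RatFunc.C (ω i) : RatFunc ℂ) ≠ 0 := fun i => by
    simpa [← RatFunc.algebraMap_eq_C] using (map_ne_zero (algebraMap ℂ (RatFunc ℂ))).mpr (hω i)
  have hpol : ∀ a : ℂ, (1 - Polynomial.C a * Polynomial.X ^ r : Polynomial ℂ) ≠ 0 := by
    intro a h
    have := congrArg (Polynomial.eval 0) h
    simp [zero_pow hr.ne'] at this
  have hD1 : (1 - RatFunc.X ^ r : RatFunc ℂ) ≠ 0 := by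
    have := RatFunc.algebraMap_ne_zero (hpol 1)
    simpa using this
  have hD2 : (1 - RatFunc.C (q ^ r) * RatFunc.X ^ r : RatFunc ℂ) ≠ 0 := by
    have := RatFunc.algebraMap_ne_zero (hpol (q ^ r))
    simpa [RatFunc.algebraMap_C] using this
  have hN : algebraMap (Polynomial ℂ) (RatFunc ℂ) P
      = RatFunc.C c * ∏ i, (1 - RatFunc.C (ω i) * RatFunc.X) := by
    simp [hP, map_mul, map_prod, map_sub, map_one, RatFunc.algebraMap_C, RatFunc.algebraMap_X]
  have hφX : φ RatFunc.X = (RatFunc.C q * RatFunc.X)⁻¹ := by rw [hφ, one_div]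
  have hE : (RatFunc.C q * RatFunc.X : RatFunc ℂ) ≠ 0 := mul_ne_zero hk hu
  have hfac : ∀ i : Fin (2 * r * (s+1)),
      (1 - RatFunc.C (ω i) * (RatFunc.C q * RatFunc.X)⁻¹)
        = (-1 : RatFunc ℂ) * ((RatFunc.C (ω i) * (1 - RatFunc.C (q / ω i) * RatFunc.X))
            * (RatFunc.C q * RatFunc.X)⁻¹) := by
    intro i
    rw [map_div₀]
    field_simp [hCω i]
    ring
  have hprod : (∏ i, (1 - RatFunc.C (ω i) * (RatFunc.C q * RatFunc.X)⁻¹))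
      = RatFunc.C (∏ i, ω i) * (∏ i, (1 - RatFunc.C (q / ω i) * RatFunc.X))
        * ((RatFunc.C q * RatFunc.X)⁻¹) ^ (2 * r * (s+1)) := by
    rw [Finset.prod_congr rfl (fun i _ => hfac i), Finset.prod_mul_distrib,
      Finset.prod_mul_distrib, Finset.prod_mul_distrib, Finset.prod_const, Finset.prod_const,
      ← map_prod]
    have h1 : ((-1 : RatFunc ℂ)) ^ (Finset.univ : Finset (Fin (2 * r * (s+1)))).card = 1 :=
      Even.neg_one_pow (by rw [Finset.card_univ, Fintype.card_fin]; exact ⟨r * (s+1), by ring⟩)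
    rw [h1]
    rw [Finset.card_univ, Fintype.card_fin]
    ring
  have hφnum : φ (RatFunc.C c * ∏ i, (1 - RatFunc.C (ω i) * RatFunc.X))
      = RatFunc.C c * (RatFunc.C (∏ i, ω i) * (∏ i, (1 - RatFunc.C (q / ω i) * RatFunc.X))
        * ((RatFunc.C q * RatFunc.X)⁻¹) ^ (2 * r * (s+1))) := by
    rw [map_mul, hCφ, map_prod]
    congr 1
    calc ∏ i, φ (1 - RatFunc.C (ω i) * RatFunc.X)
        = ∏ i, (1 - RatFunc.C (ω i) * (RatFunc.C q * RatFunc.X)⁻¹) :=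
          Finset.prod_congr rfl fun i _ => by rw [map_sub, map_one, map_mul, hCφ, hφX]
      _ = _ := hprod
  have hφden : φ ((1 - RatFunc.X ^ r) * (1 - RatFunc.C (q ^ r) * RatFunc.X ^ r))
      = (1 - ((RatFunc.C q * RatFunc.X)⁻¹) ^ r)
        * (1 - RatFunc.C (q ^ r) * ((RatFunc.C q * RatFunc.X)⁻¹) ^ r) := by
    simp [map_mul, map_sub, map_pow, hCφ, hφX]
  have hφZ : φ Z = (RatFunc.C c * (RatFunc.C (∏ i, ω i)
        * (∏ i, (1 - RatFunc.C (q / ω i) * RatFunc.X))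
        * ((RatFunc.C q * RatFunc.X)⁻¹) ^ (2 * r * (s+1))))
      / ((1 - ((RatFunc.C q * RatFunc.X)⁻¹) ^ r)
        * (1 - RatFunc.C (q ^ r) * ((RatFunc.C q * RatFunc.X)⁻¹) ^ r)) := by
    rw [hZ, hN, map_div₀, hφnum, hφden]
  have hmz : (-(r * ((s+1:ℕ) - 1) : ℤ)) = -((r*s : ℕ) : ℤ) := by push_cast; ring
  have hmz2 : ((r * ((s+1:ℕ) - 1) : ℤ)) = ((r*s : ℕ) : ℤ) := by push_cast; ring
  rw [hφZ, hZ, hN, hmz, hmz2, zpow_neg, zpow_natCast, zpow_natCast, map_pow] at hfe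
  rw [map_pow] at hD2
  set A1 := ∏ i, (1 - RatFunc.C (ω i) * RatFunc.X) with hA1
  set A2 := ∏ i, (1 - RatFunc.C (q / ω i) * RatFunc.X) with hA2
  set W := RatFunc.C (∏ i, ω i) with hW
  set K := RatFunc.C q with hK
  set cc := RatFunc.C c with hcc
  set u := RatFunc.X (K := ℂ) with hu'
  have hcc0 : cc ≠ 0 := by
    rw [hcc]
    simpa [← RatFunc.algebraMap_eq_C] using (map_ne_zero (algebraMap ℂ (RatFunc ℂ))).mpr hc
  have hKu : K * u ≠ 0 := hE
  have hd1 : (K * u) ^ r - 1 ≠ 0 := by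
    rw [mul_pow]
    intro h; exact hD2 (by linear_combination -h)
  have hd2 : (K * u) ^ r - K ^ r ≠ 0 := by
    have : K ^ r * (u ^ r - 1) ≠ 0 :=
      mul_ne_zero (pow_ne_zero _ hk) (fun h => hD1 (by linear_combination -h))
    intro h; exact this (by rw [mul_pow] at h; linear_combination h)
  have key : K ^ (r * (s+1)) * A1 = W * A2 := by
    have e1 : (1 - ((K*u)⁻¹)^r) = -(1 - K^r * u^r) * ((K*u)^r)⁻¹ := by
      rw [inv_pow, mul_pow]; field_simp; ring
    have e2 : (1 - K^r*((K*u)⁻¹)^r) = -(K^r * (1 - u^r)) * ((K*u)^r)⁻¹ := by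
      rw [inv_pow, mul_pow]; field_simp; ring
    rw [e1, e2] at hfe
    field_simp at hfe
    have hD' : 1 - u^r*K^r ≠ 0 := by rwa [mul_comm (u^r)]
    rw [one_div, inv_pow, div_left_inj' hD'] at hfe
    have h3 : (K*u)^(2*r*(s+1)) = ((K*u)^r)^2 * (K*u)^(r*s) * (K*u)^(r*s) := by ring
    rw [h3] at hfe
    field_simp at hfe
    apply mul_left_cancel₀ (pow_ne_zero (r*s) hu)
    rw [mul_pow] at hfe
    linear_combination hfe
  have key2 : RatFunc.C (q ^ (r * (s+1))) * A1 = W * A2 := by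
    rw [map_pow]; exact key
  have key' : Polynomial.C (q ^ (r * (s+1))) * (∏ i, (1 - Polynomial.C (ω i) * Polynomial.X))
      = Polynomial.C (∏ i, ω i) * ∏ i, (1 - Polynomial.C (q / ω i) * Polynomial.X) := by
    apply RatFunc.algebraMap_injective ℂ
    simp only [map_mul, map_prod, map_sub, map_one, RatFunc.algebraMap_C, RatFunc.algebraMap_X]
    rw [hW, map_prod] at key2
    exact key2
  have h0 : q ^ (r * (s+1)) = ∏ i, ω i := by
    have := congrArg (Polynomial.eval 0) key'
    simpa [Polynomial.eval_prod] using this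
  refine ⟨h0.symm, ?_⟩
  have hCne : (Polynomial.C (q ^ (r * (s+1))) : Polynomial ℂ) ≠ 0 := by
    simpa using pow_ne_zero (r * (s+1)) hq
  rw [← h0] at key'
  exact mul_left_cancel₀ hCne key'
end

section
/- Let r be a positive integer, q a complex number, n a natural number, and ω : {1, …, n} → ℂ. In the ring ℂ⟦t⟧ of formal power series, the series 1 − t^r and 1 − (q t)^r have constant coefficient 1 and hence are units; set Z = (∏_{i=1}^{n}(1 − ω_i t)) · (1 − t^r)^{−1} · (1 − (q t)^r)^{−1}. For m ≥ 1 define N_m = r(1 + q^m) − ∑_{i=1}^{n} ω_i^m if r divides m, and N_m = −∑_{i=1}^{n} ω_i^m otherwise. Then t · (dZ/dt) = Z · ∑_{m=1}^∞ N_m t^m in ℂ⟦t⟧; equivalently, Z = exp(∑_{m=1}^∞ N_m t^m / m). -/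
open PowerSeries

private lemma logd_mul9 {f g s u : PowerSeries ℂ}
    (hf : X * derivative ℂ f = f * s) (hg : X * derivative ℂ g = g * u) :
    X * derivative ℂ (f * g) = f * g * (s + u) := by
  rw [Derivation.leibniz]
  simp only [smul_eq_mul, mul_add]
  rw [mul_left_comm X f, hg, mul_left_comm X g, hf]
  ring

private lemma logd_inv9 {f s : PowerSeries ℂ} (hc : constantCoeff f ≠ 0)
    (hf : X * derivative ℂ f = f * s) :
    X * derivative ℂ f⁻¹ = f⁻¹ * (-s) := by
  have h1 : f * f⁻¹ = 1 := PowerSeries.mul_inv_cancel f hc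
  have h2 : derivative ℂ (f * f⁻¹) = 0 := by rw [h1, Derivation.map_one_eq_zero]
  rw [Derivation.leibniz] at h2
  simp only [smul_eq_mul] at h2
  have h3 : f * (X * derivative ℂ f⁻¹) = -s := by
    have he : f * derivative ℂ f⁻¹ = -(f⁻¹ * derivative ℂ f) := by linear_combination h2
    calc f * (X * derivative ℂ f⁻¹) = X * (f * derivative ℂ f⁻¹) := by ring
    _ = X * (-(f⁻¹ * derivative ℂ f)) := by rw [he]
    _ = -(f⁻¹ * (X * derivative ℂ f)) := by ring
    _ = -(f⁻¹ * (f * s)) := by rw [hf]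
    _ = -((f⁻¹ * f) * s) := by ring
    _ = -s := by rw [mul_comm f⁻¹ f, h1, one_mul]
  calc X * derivative ℂ f⁻¹ = (f * f⁻¹) * (X * derivative ℂ f⁻¹) := by rw [h1, one_mul]
  _ = f⁻¹ * (f * (X * derivative ℂ f⁻¹)) := by ring
  _ = f⁻¹ * (-s) := by rw [h3]

private lemma logd_prod9 {ι : Type*} (t : Finset ι) (f S : ι → PowerSeries ℂ)
    (h : ∀ i ∈ t, X * derivative ℂ (f i) = f i * S i) :
    X * derivative ℂ (∏ i ∈ t, f i) = (∏ i ∈ t, f i) * ∑ i ∈ t, S i := by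
  induction t using Finset.cons_induction with
  | empty => simp [Derivation.map_one_eq_zero]
  | cons a t ha ih =>
    rw [Finset.prod_cons, Finset.sum_cons]
    exact logd_mul9 (h a (Finset.mem_cons_self a t))
      (ih fun i hi => h i (Finset.mem_cons.2 (Or.inr hi)))

private lemma geom_lin9 (c : ℂ) :
    (1 - C c * X) * PowerSeries.mk (fun m => if m = 0 then 0 else -(c ^ m))
      = -(C c * X) := by
  ext k
  rw [sub_mul, one_mul, map_sub]
  rcases k with _ | k
  · simp [coeff_zero_eq_constantCoeff]
  · rw [mul_assoc, coeff_C_mul, coeff_succ_X_mul, coeff_mk, coeff_mk, map_neg, coeff_C_mul]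
    rcases k with _ | k
    · simp
    · simp only [Nat.succ_ne_zero, if_false, coeff_X, Nat.add_eq]
      norm_num [pow_succ]
      ring

private lemma logd_lin9 (c : ℂ) :
    X * derivative ℂ (1 - C c * X)
      = (1 - C c * X) * PowerSeries.mk (fun m => if m = 0 then 0 else -(c ^ m)) := by
  rw [geom_lin9]
  rw [map_sub, Derivation.map_one_eq_zero, Derivation.leibniz]
  simp only [derivative_C, derivative_X, smul_eq_mul, mul_one, mul_zero, add_zero, zero_sub]
  ring

private lemma geom_pow9 (r : ℕ) (hr : 0 < r) (b : ℂ) :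
    (1 - C (b ^ r) * X ^ r) *
      PowerSeries.mk (fun m => if r ∣ m ∧ m ≠ 0 then -((r : ℂ) * b ^ m) else 0)
      = -((r : ℂ) * b ^ r) • X ^ r := by
  ext m
  rw [sub_mul, one_mul, map_sub, coeff_mk,
    show C (b ^ r) * X ^ r *
        PowerSeries.mk (fun m => if r ∣ m ∧ m ≠ 0 then -((r : ℂ) * b ^ m) else 0)
      = C (b ^ r) *
        (PowerSeries.mk (fun m => if r ∣ m ∧ m ≠ 0 then -((r : ℂ) * b ^ m) else 0) * X ^ r)
      from by ring,
    coeff_C_mul, coeff_mul_X_pow', coeff_smul, coeff_X_pow]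
  simp only [coeff_mk, smul_eq_mul]
  by_cases hm : r ≤ m
  · rw [if_pos hm]
    rcases eq_or_lt_of_le hm with h | h
    · have h0 : ¬ (r ∣ (m - r) ∧ m - r ≠ 0) := by omega
      have h1 : r ∣ m ∧ m ≠ 0 := ⟨⟨1, by omega⟩, by omega⟩
      rw [if_pos h1, if_neg h0, if_pos h.symm, ← h]
      ring
    · have hmr : m ≠ r := by omega
      rw [if_neg hmr, mul_zero]
      by_cases hd : r ∣ m
      · have h1 : r ∣ m ∧ m ≠ 0 := ⟨hd, by omega⟩
        have h0 : r ∣ (m - r) ∧ m - r ≠ 0 := ⟨Nat.dvd_sub hd dvd_rfl, by omega⟩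
        rw [if_pos h1, if_pos h0]
        have hb : b ^ r * b ^ (m - r) = b ^ m := by rw [← pow_add]; congr 1; omega
        rw [mul_neg, ← mul_assoc, mul_comm (b ^ r) (r : ℂ), mul_assoc, hb]
        ring
      · have h1 : ¬ (r ∣ m ∧ m ≠ 0) := fun h => hd h.1
        have h0 : ¬ (r ∣ (m - r) ∧ m - r ≠ 0) := by
          rintro ⟨h', -⟩
          exact hd (by have := Nat.dvd_add h' (dvd_refl r); rwa [Nat.sub_add_cancel hm] at this)
        rw [if_neg h1, if_neg h0]; ring
  · have h1 : ¬ (r ∣ m ∧ m ≠ 0) := by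
      rintro ⟨⟨k, hk⟩, h''⟩
      rcases k with _ | k
      · omega
      · have : r ≤ m := hk ▸ Nat.le_mul_of_pos_right r (by omega)
        omega
    have hmr : m ≠ r := by omega
    rw [if_neg h1, if_neg hm, if_neg hmr]; ring

private lemma logd_pow9 (r : ℕ) (hr : 0 < r) (b : ℂ) :
    X * derivative ℂ (1 - C (b ^ r) * X ^ r)
      = (1 - C (b ^ r) * X ^ r) *
        PowerSeries.mk (fun m => if r ∣ m ∧ m ≠ 0 then -((r : ℂ) * b ^ m) else 0) := by
  rw [geom_pow9 r hr]
  rw [map_sub, Derivation.map_one_eq_zero, Derivation.leibniz, Derivation.leibniz_pow]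
  simp only [derivative_C, derivative_X, smul_eq_mul, mul_one, mul_zero, add_zero, zero_sub,
    smul_eq_mul]
  have hx : X * X ^ (r - 1) = (X : PowerSeries ℂ) ^ r := by
    rw [← pow_succ']; congr 1; omega
  rw [nsmul_eq_mul, PowerSeries.smul_eq_C_mul, map_neg, map_mul, ← map_natCast C r, ← hx]
  ring


/-- Corollary (a) to Theorem 2: for
`Z = (∏_{i=1}^n (1 - ω_i t))·(1 - t^r)⁻¹·(1 - (qt)^r)⁻¹` in `ℂ⟦t⟧`, the series
`1 - t^r` and `1 - (qt)^r` have constant coefficient `1` (hence are units), and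
with `N_m = r(1 + q^m) - ∑ ω_i^m` if `r ∣ m` and `N_m = -∑ ω_i^m` otherwise,
one has `t·(dZ/dt) = Z·∑_{m≥1} N_m t^m`. -/
theorem stmt_9 (r : ℕ) (hr : 0 < r) (q : ℂ) (n : ℕ) (ω : Fin n → ℂ)
    (N : ℕ → ℂ)
    (hN : ∀ m : ℕ, N m =
      if r ∣ m then (r : ℂ) * (1 + q ^ m) - ∑ i, ω i ^ m else -∑ i, ω i ^ m)
    (Z : PowerSeries ℂ)
    (hZ : Z = (∏ i, (1 - PowerSeries.C (ω i) * PowerSeries.X)) *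
        (1 - PowerSeries.X ^ r)⁻¹ *
        (1 - (PowerSeries.C q * PowerSeries.X) ^ r)⁻¹) :
    PowerSeries.constantCoeff (R := ℂ) (1 - PowerSeries.X ^ r) = 1 ∧
    PowerSeries.constantCoeff (R := ℂ) (1 - (PowerSeries.C q * PowerSeries.X) ^ r) = 1 ∧
    IsUnit (1 - PowerSeries.X ^ r : PowerSeries ℂ) ∧
    IsUnit (1 - (PowerSeries.C q * PowerSeries.X) ^ r : PowerSeries ℂ) ∧
    PowerSeries.X * PowerSeries.derivative ℂ Z
      = Z * PowerSeries.mk (fun m => if m = 0 then 0 else N m) := by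
  have cc1 : constantCoeff (1 - X ^ r : PowerSeries ℂ) = 1 := by
    simp [zero_pow hr.ne']
  have cc2 : constantCoeff (1 - (C q * X) ^ r : PowerSeries ℂ) = 1 := by
    simp [zero_pow hr.ne']
  have u1 : IsUnit (1 - X ^ r : PowerSeries ℂ) :=
    IsUnit.of_mul_eq_one _ (PowerSeries.mul_inv_cancel _ (by rw [cc1]; exact one_ne_zero))
  have u2 : IsUnit (1 - (C q * X) ^ r : PowerSeries ℂ) :=
    IsUnit.of_mul_eq_one _ (PowerSeries.mul_inv_cancel _ (by rw [cc2]; exact one_ne_zero))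
  refine ⟨cc1, cc2, u1, u2, ?_⟩
  set sA : ℕ → ℂ := fun m => if r ∣ m ∧ m ≠ 0 then -((r : ℂ)) else 0 with hsA
  set sB : ℕ → ℂ := fun m => if r ∣ m ∧ m ≠ 0 then -((r : ℂ) * q ^ m) else 0 with hsB
  set SP : PowerSeries ℂ :=
    ∑ i, PowerSeries.mk (fun m => if m = 0 then 0 else -(ω i ^ m)) with hSP
  have hP : X * derivative ℂ (∏ i, (1 - C (ω i) * X))
      = (∏ i, (1 - C (ω i) * X)) * SP :=
    logd_prod9 _ _ _ (fun i _ => logd_lin9 (ω i))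
  have hA' : X * derivative ℂ (1 - X ^ r : PowerSeries ℂ)
      = (1 - X ^ r) * PowerSeries.mk sA := by
    have := logd_pow9 r hr 1
    simpa [hsA] using this
  have hB' : X * derivative ℂ (1 - (C q * X) ^ r : PowerSeries ℂ)
      = (1 - (C q * X) ^ r) * PowerSeries.mk sB := by
    have hB : (1 - (C q * X) ^ r : PowerSeries ℂ) = 1 - C (q ^ r) * X ^ r := by
      rw [mul_pow, ← map_pow]
    rw [hB]
    exact logd_pow9 r hr q
  have hAinv : X * derivative ℂ (1 - X ^ r : PowerSeries ℂ)⁻¹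
      = (1 - X ^ r : PowerSeries ℂ)⁻¹ * (-(PowerSeries.mk sA)) :=
    logd_inv9 (by rw [cc1]; exact one_ne_zero) hA'
  have hBinv : X * derivative ℂ (1 - (C q * X) ^ r : PowerSeries ℂ)⁻¹
      = (1 - (C q * X) ^ r : PowerSeries ℂ)⁻¹ * (-(PowerSeries.mk sB)) :=
    logd_inv9 (by rw [cc2]; exact one_ne_zero) hB'
  have hmain : X * derivative ℂ Z
      = Z * (SP + -(PowerSeries.mk sA) + -(PowerSeries.mk sB)) := by
    rw [hZ]
    exact logd_mul9 (logd_mul9 hP hAinv) hBinv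
  rw [hmain]
  congr 1
  ext m
  simp only [map_add, map_neg, map_sum, coeff_mk, hSP, hsA, hsB, hN m]
  by_cases h0 : m = 0
  · subst h0
    simp
  · by_cases hd : r ∣ m
    · simp only [h0, hd, ne_eq, not_false_eq_true, and_self, if_true, if_false, ite_true,
        ite_false, Finset.sum_neg_distrib]
      simp [h0, hd, Finset.sum_neg_distrib]
      ring
    · simp [h0, hd]
end

section
/- Let a be a positive integer, N : ℕ → ℂ a function, and F ∈ ℂ⟦t⟧ a formal power series satisfying t · (dF/dt) = F · ∑_{m=1}^∞ N_m t^m. Let ζ_1, …, ζ_a be the a-th roots of unity in ℂ (the a roots of X^a − 1), and set G = ∏_{i=1}^{a} F(ζ_i t), where F(ζ t) denotes the rescaling of F by ζ. Then t · (dG/dt) = G · ∑_{k=1}^∞ a · N_{ak} t^{ak} in ℂ⟦t⟧; equivalently, if F = exp(∑_{m≥1} N_m t^m/m) then ∏_{i=1}^{a} F(ζ_i t) = exp(∑_{k=1}^∞ N_{ak} T^k / k) with T = t^a. -/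
open PowerSeries Polynomial

private lemma coeff_X_mul_der (f : ℂ⟦X⟧) (n : ℕ) :
    (PowerSeries.coeff n) (PowerSeries.X * PowerSeries.derivative ℂ f)
      = (n : ℂ) * PowerSeries.coeff n f := by
  cases n with
  | zero => simp
  | succ n =>
    rw [PowerSeries.coeff_succ_X_mul, PowerSeries.coeff_derivative]
    push_cast; ring

private lemma X_mul_der_rescale (ζ : ℂ) (f : ℂ⟦X⟧) :
    PowerSeries.X * PowerSeries.derivative ℂ (PowerSeries.rescale ζ f)
      = PowerSeries.rescale ζ (PowerSeries.X * PowerSeries.derivative ℂ f) := by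
  ext n
  rw [coeff_X_mul_der, PowerSeries.coeff_rescale, PowerSeries.coeff_rescale,
    coeff_X_mul_der]
  ring

private lemma logderiv_prod (S : Multiset (ℂ⟦X⟧ × ℂ⟦X⟧))
    (h : ∀ p ∈ S, PowerSeries.X * PowerSeries.derivative ℂ p.1 = p.1 * p.2) :
    PowerSeries.X * PowerSeries.derivative ℂ (S.map Prod.fst).prod
      = (S.map Prod.fst).prod * (S.map Prod.snd).sum := by
  induction S using Multiset.induction with
  | empty => simp
  | cons p S ih =>
    have hp := h p (Multiset.mem_cons_self p S)
    have hS := ih (fun q hq => h q (Multiset.mem_cons_of_mem hq))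
    simp only [Multiset.map_cons, Multiset.prod_cons, Multiset.sum_cons]
    rw [Derivation.leibniz, smul_eq_mul, smul_eq_mul]
    linear_combination (Multiset.map Prod.fst S).prod * hp + p.1 * hS

/-- Corollary (b) to Theorem 2 (formula (***)): if `F ∈ ℂ⟦t⟧` satisfies the
logarithmic-derivative equation `t·F' = F·∑_{m≥1} N_m t^m` and
`G = ∏_{ζ^a = 1} F(ζt)` (product over all `a`-th roots of unity, i.e. the
roots of `X^a - 1`), then `t·G' = G·∑_{k≥1} a·N_{ak} t^{ak}`. -/
theorem stmt_10 (a : ℕ) (ha : 0 < a) (N : ℕ → ℂ) (F : PowerSeries ℂ)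
    (hF : PowerSeries.X * PowerSeries.derivative ℂ F
        = F * PowerSeries.mk (fun m => if m = 0 then 0 else N m))
    (G : PowerSeries ℂ)
    (hG : G = ((Polynomial.nthRoots a (1 : ℂ)).map
        (fun ζ => PowerSeries.rescale ζ F)).prod) :
    PowerSeries.X * PowerSeries.derivative ℂ G
      = G * PowerSeries.mk
          (fun m => if m = 0 then 0 else if a ∣ m then (a : ℂ) * N m else 0) := by
  set Nser : PowerSeries ℂ := PowerSeries.mk (fun m => if m = 0 then 0 else N m) with hNser
  have key := logderiv_prod ((Polynomial.nthRoots a (1 : ℂ)).map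
      (fun ζ => (PowerSeries.rescale ζ F, PowerSeries.rescale ζ Nser))) ?_
  · rw [Multiset.map_map, Multiset.map_map] at key
    simp only [Function.comp_def] at key
    rw [hG, key]
    congr 1
    -- it remains to compute the sum of the rescaled series
    obtain ⟨ζ0, hζ0⟩ : ∃ ζ0 : ℂ, IsPrimitiveRoot ζ0 a :=
      ⟨_, Complex.isPrimitiveRoot_exp a ha.ne'⟩
    rw [hζ0.nthRoots_eq (one_pow a), Multiset.map_map]
    ext m
    rw [PowerSeries.coeff_mk]
    have hsum : (PowerSeries.coeff m)
        (((Multiset.range a).map ((fun ζ => PowerSeries.rescale ζ Nser) ∘ fun x => ζ0 ^ x * 1)).sum)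
        = ∑ i ∈ Finset.range a, (ζ0 ^ m) ^ i * (PowerSeries.coeff m Nser) := by
      rw [map_multiset_sum, Multiset.map_map]
      simp only [Function.comp_def, mul_one, PowerSeries.coeff_rescale, ← pow_mul,
        mul_comm m]
      rfl
    rw [hsum, ← Finset.sum_mul, hNser, PowerSeries.coeff_mk]
    rcases eq_or_ne m 0 with hm | hm
    · simp [hm]
    rw [if_neg hm, if_neg hm]
    by_cases hdvd : a ∣ m
    · have h1 : ζ0 ^ m = 1 := (hζ0.pow_eq_one_iff_dvd m).mpr hdvd
      rw [if_pos hdvd, h1]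
      simp
    · have h1 : ζ0 ^ m ≠ 1 := fun h => hdvd ((hζ0.pow_eq_one_iff_dvd m).mp h)
      rw [if_neg hdvd, geom_sum_eq h1, ← pow_mul, mul_comm m a, pow_mul, hζ0.pow_eq_one,
        one_pow]
      simp
  · rintro p hp
    rw [Multiset.mem_map] at hp
    obtain ⟨ζ, -, rfl⟩ := hp
    rw [X_mul_der_rescale, hF, map_mul]
end
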